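/- Let ρ(u) = √(u(4−u))/(2πu) for u ∈ (0,4] (the Marchenko–Pastur density). For every L > 0 and every t > 0, ∫₀⁴ max( L·ρ(u) − t/(2π), 0 ) du = (2L/π)·arctan(L/t); equivalently it equals L − (2L/π)·arctan(t/L). -/

import Mathlib

/-!
The integrand is positive exactly on `(0, c)` with `c = 4 / (1 + (t / L) ^ 2)`, where the level
`t / (2π)` crosses `L ρ`, so the integral equals `∫₀ᶜ (L ρ - t / (2π))`. An antiderivative of `ρ`
is `(√(u (4 - u)) + 2 arcsin ((u - 2) / 2)) / (2π)`, and at `u = c` the half-angle identity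
`cos (2 arctan s) = (1 - s²) / (1 + s²)` with `s = t / L` turns `arcsin ((c - 2) / 2)` into
`π / 2 - 2 arctan s`.
-/

open MeasureTheory Real

/-- The Marchenko–Pastur density `ρ(u) = √(u(4−u))/(2πu)` on `(0, 4]`. -/
noncomputable def rhoMP (u : ℝ) : ℝ :=
  Real.sqrt (u * (4 - u)) / (2 * Real.pi * u)

open Set

theorem intervalIntegral.integral_max_zero_eq_integral_of_nonneg_of_nonpos {f : ℝ → ℝ}
    {a b c : ℝ} (hac : a ≤ c) (hcb : c ≤ b) (hf : IntervalIntegrable f volume a b)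
    (hpos : ∀ x ∈ Ioc a c, 0 ≤ f x) (hneg : ∀ x ∈ Ioc c b, f x ≤ 0) :
    ∫ x in a..b, max (f x) 0 = ∫ x in a..c, f x := by
  have hf' : IntervalIntegrable (fun x => max (f x) 0) volume a b :=
    ⟨hf.1.pos_part, hf.2.pos_part⟩
  rw [← intervalIntegral.integral_add_adjacent_intervals
      (hf'.mono_set (uIcc_subset_uIcc_left (Icc_subset_uIcc ⟨hac, hcb⟩)))
      (hf'.mono_set (uIcc_subset_uIcc_right (Icc_subset_uIcc ⟨hac, hcb⟩))),
    intervalIntegral.integral_of_le hac, intervalIntegral.integral_of_le hac,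
    intervalIntegral.integral_of_le hcb,
    setIntegral_congr_fun measurableSet_Ioc fun x hx => max_eq_left (hpos x hx),
    setIntegral_congr_fun measurableSet_Ioc fun x hx => max_eq_right (hneg x hx)]
  simp

theorem rhoMP_nonneg (u : ℝ) : 0 ≤ rhoMP u := by
  rcases le_or_gt 0 u with hu | hu
  · unfold rhoMP; positivity
  · rw [rhoMP, sqrt_eq_zero'.2 (mul_nonpos_of_nonpos_of_nonneg hu.le (by linarith)), zero_div]

noncomputable def mpPrimitive (u : ℝ) : ℝ :=
  (√(u * (4 - u)) + 2 * arcsin ((u - 2) / 2)) / (2 * π)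

theorem continuous_mpPrimitive : Continuous mpPrimitive := by
  unfold mpPrimitive
  fun_prop

theorem hasDerivAt_mpPrimitive {u : ℝ} (hu0 : 0 < u) (hu4 : u < 4) :
    HasDerivAt mpPrimitive (rhoMP u) u := by
  have hprod : 0 < u * (4 - u) := mul_pos hu0 (by linarith)
  have hpoly : HasDerivAt (fun v => v * (4 - v)) (4 - 2 * u) u :=
    ((hasDerivAt_id' u).mul ((hasDerivAt_id' u).const_sub 4)).congr_deriv (by ring)
  have hlin : HasDerivAt (fun v => (v - 2) / 2) (1 / 2) u := by
    simpa using ((hasDerivAt_id' u).sub_const 2).div_const 2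
  have hne1 : (u - 2) / 2 ≠ -1 := by intro h; field_simp at h; linarith
  have hne2 : (u - 2) / 2 ≠ 1 := by intro h; field_simp at h; linarith
  have hsum :=
    (hpoly.sqrt hprod.ne').add (((hasDerivAt_arcsin hne1 hne2).comp u hlin).const_mul 2)
  have hss : √(u * (4 - u)) ^ 2 = u * (4 - u) := sq_sqrt hprod.le
  have hroot : √(1 - ((u - 2) / 2) ^ 2) = √(u * (4 - u)) / 2 := by
    rw [show 1 - ((u - 2) / 2) ^ 2 = (√(u * (4 - u)) / 2) ^ 2 by
        linear_combination (-1 / 4 : ℝ) * hss,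
      sqrt_sq (by positivity)]
  refine (hsum.div_const (2 * π)).congr_deriv ?_
  rw [rhoMP, hroot]
  field_simp
  linear_combination (-2 : ℝ) * hss

theorem intervalIntegrable_rhoMP {c : ℝ} (hc0 : 0 ≤ c) (hc4 : c ≤ 4) :
    IntervalIntegrable rhoMP volume 0 c :=
  (intervalIntegrable_iff_integrableOn_Ioc_of_le hc0).2 <|
    intervalIntegral.integrableOn_deriv_of_nonneg continuous_mpPrimitive.continuousOn
      (fun _ hu => hasDerivAt_mpPrimitive hu.1 (hu.2.trans_le hc4)) fun u _ => rhoMP_nonneg u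

theorem integral_rhoMP {c : ℝ} (hc0 : 0 ≤ c) (hc4 : c ≤ 4) :
    ∫ u in (0 : ℝ)..c, rhoMP u = mpPrimitive c - mpPrimitive 0 :=
  intervalIntegral.integral_eq_sub_of_hasDerivAt_of_le hc0 continuous_mpPrimitive.continuousOn
    (fun _ hu => hasDerivAt_mpPrimitive hu.1 (hu.2.trans_le hc4))
    (intervalIntegrable_rhoMP hc0 hc4)

theorem mpPrimitive_zero : mpPrimitive 0 = -1 / 2 := by
  norm_num [mpPrimitive]
  field_simp

theorem cos_two_mul_arctan (s : ℝ) : cos (2 * arctan s) = (1 - s ^ 2) / (1 + s ^ 2) := by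
  have h : 0 < 1 + s ^ 2 := by positivity
  rw [cos_two_mul, cos_arctan, div_pow, one_pow, sq_sqrt h.le]
  field_simp
  ring

theorem arcsin_one_sub_sq_div_one_add_sq {s : ℝ} (hs : 0 ≤ s) :
    arcsin ((1 - s ^ 2) / (1 + s ^ 2)) = π / 2 - 2 * arctan s := by
  have h0 : 0 ≤ arctan s := arctan_zero ▸ arctan_strictMono.monotone hs
  rw [← cos_two_mul_arctan, arcsin_eq_pi_div_two_sub_arccos,
    arccos_cos (by linarith) (by linarith [arctan_lt_pi_div_two s])]

theorem mpPrimitive_four_div_one_add_sq {s : ℝ} (hs : 0 ≤ s) :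
    mpPrimitive (4 / (1 + s ^ 2)) = (4 * s / (1 + s ^ 2) + π - 4 * arctan s) / (2 * π) := by
  have hroot : √(4 / (1 + s ^ 2) * (4 - 4 / (1 + s ^ 2))) = 4 * s / (1 + s ^ 2) := by
    rw [← sqrt_sq (by positivity : 0 ≤ 4 * s / (1 + s ^ 2))]
    congr 1
    field_simp
    ring
  have harg : (4 / (1 + s ^ 2) - 2) / 2 = (1 - s ^ 2) / (1 + s ^ 2) := by
    field_simp
    ring
  rw [mpPrimitive, hroot, harg, arcsin_one_sub_sq_div_one_add_sq hs]
  ring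

theorem div_le_mul_rhoMP_iff {L t u : ℝ} (hL : 0 < L) (ht : 0 ≤ t) (hu0 : 0 < u)
    (hu4 : u ≤ 4) :
    t / (2 * π) ≤ L * rhoMP u ↔ u ≤ 4 / (1 + (t / L) ^ 2) := by
  have hroot : L * √(u * (4 - u)) = √(L ^ 2 * (u * (4 - u))) := by
    rw [sqrt_mul (sq_nonneg L), sqrt_sq hL.le]
  calc t / (2 * π) ≤ L * rhoMP u ↔ (t * u) * (2 * π) ≤ L * √(u * (4 - u)) * (2 * π) := by
        rw [rhoMP, mul_div_assoc', div_le_div_iff₀ (by positivity) (by positivity)]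
        ring_nf
    _ ↔ (t * u) ^ 2 ≤ L ^ 2 * (u * (4 - u)) := by
        have : 0 ≤ 4 - u := by linarith
        rw [mul_le_mul_iff_of_pos_right (by positivity), hroot,
          le_sqrt (by positivity) (by positivity)]
    _ ↔ u * (t ^ 2 * u) ≤ u * (L ^ 2 * (4 - u)) := by ring_nf
    _ ↔ u ≤ 4 / (1 + (t / L) ^ 2) := by
        rw [mul_le_mul_iff_of_pos_left hu0, le_div_iff₀ (by positivity), div_pow,
          ← mul_le_mul_iff_of_pos_left (by positivity : 0 < L ^ 2)]
        field_simp
        constructor <;> intro h <;> linarith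

/-- Refined connected two-point form factor integral for the LUE:
for `L > 0` and `t > 0`,
`∫₀⁴ max(Lρ(u) − t/(2π), 0) du = (2L/π) arctan(L/t) = L − (2L/π) arctan(t/L)`. -/
theorem lue_refined_form_factor_integral (L t : ℝ) (hL : 0 < L) (ht : 0 < t) :
    (∫ u in (0:ℝ)..4, max (L * rhoMP u - t / (2 * Real.pi)) 0)
        = (2 * L / Real.pi) * Real.arctan (L / t) ∧
    (∫ u in (0:ℝ)..4, max (L * rhoMP u - t / (2 * Real.pi)) 0)
        = L - (2 * L / Real.pi) * Real.arctan (t / L) := by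
  have hs : 0 < t / L := div_pos ht hL
  set c := 4 / (1 + (t / L) ^ 2) with hc
  have hc0 : 0 < c := by positivity
  have hc4 : c ≤ 4 := div_le_self (by norm_num) (by nlinarith)
  have hsign : ∀ u ∈ Ioc 0 4, 0 ≤ L * rhoMP u - t / (2 * π) ↔ u ≤ c := fun u hu => by
    rw [sub_nonneg, div_le_mul_rhoMP_iff hL ht.le hu.1 hu.2]
  have hval : ∫ u in (0:ℝ)..4, max (L * rhoMP u - t / (2 * π)) 0
      = L - 2 * L / π * arctan (t / L) := by
    rw [intervalIntegral.integral_max_zero_eq_integral_of_nonneg_of_nonpos hc0.le hc4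
        (((intervalIntegrable_rhoMP (by norm_num) le_rfl).const_mul L).sub
          intervalIntegrable_const)
        (fun u hu => (hsign u ⟨hu.1, hu.2.trans hc4⟩).2 hu.2)
        (fun u hu => (not_le.1 (mt (hsign u ⟨hc0.trans hu.1, hu.2⟩).1 hu.1.not_ge)).le),
      intervalIntegral.integral_sub ((intervalIntegrable_rhoMP hc0.le hc4).const_mul L)
        intervalIntegrable_const,
      intervalIntegral.integral_const_mul, integral_rhoMP hc0.le hc4, mpPrimitive_zero,
      mpPrimitive_four_div_one_add_sq hs.le, intervalIntegral.integral_const, smul_eq_mul, hc]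
    field_simp
    ring
  refine ⟨?_, hval⟩
  rw [hval, ← inv_div t L, arctan_inv_of_pos hs]
  field_simp
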